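/- Let R > 0, let g : [R,∞) → [0,∞) be measurable, and let a, p ∈ ℝ with p + a < 2. Suppose there exists K ≥ 0 such that for every s ≥ R, ∫_s^{2s} r² g(r) dr ≤ K s^a. Then ∫_R^∞ r^p g(r) dr ≤ C(p,a) · K · R^{a+p−2}, where C(p,a) = 2^{2−p} / (1 − 2^{a+p−2}) (any constant depending only on p and a suffices). -/
import Mathlib


open MeasureTheory

/-- helper: on a dyadic interval `[b, 2b]`, `r ^ q ≤ max 1 (2^q) * b ^ q`. -/
lemma dyadic_rpow_bound (q b r : ℝ) (hb : 0 < b) (h1 : b ≤ r) (h2 : r ≤ 2 * b) :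
    r ^ q ≤ max 1 ((2:ℝ) ^ q) * b ^ q := by
  have hbq : (0:ℝ) ≤ b ^ q := (Real.rpow_pos_of_pos hb q).le
  rcases le_or_gt q 0 with hq | hq
  · have : r ^ q ≤ b ^ q := Real.rpow_le_rpow_of_nonpos hb h1 hq
    calc r ^ q ≤ 1 * b ^ q := by linarith
    _ ≤ max 1 ((2:ℝ) ^ q) * b ^ q := by
        apply mul_le_mul_of_nonneg_right (le_max_left _ _) hbq
  · have : r ^ q ≤ (2 * b) ^ q :=
      Real.rpow_le_rpow (hb.le.trans h1) h2 hq.le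
    rw [Real.mul_rpow (by norm_num) hb.le] at this
    calc r ^ q ≤ (2:ℝ) ^ q * b ^ q := this
    _ ≤ max 1 ((2:ℝ) ^ q) * b ^ q := by
        apply mul_le_mul_of_nonneg_right (le_max_right _ _) hbq

/-- Dyadic summation lemma: if `p + a < 2` then there is a constant `C = C(p,a) > 0`
such that whenever `g ≥ 0` is measurable on `[R,∞)` with `∫_s^{2s} r² g(r) dr ≤ K s^a`
for all `s ≥ R`, one has `∫_R^∞ r^p g(r) dr ≤ C K R^{a+p−2}`. -/
theorem dyadic_summation (p a : ℝ) (hpa : p + a < 2) :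
    ∃ C : ℝ, 0 < C ∧
      ∀ (R K : ℝ) (g : ℝ → ℝ), 0 < R → 0 ≤ K → Measurable g →
        (∀ r ∈ Set.Ici R, 0 ≤ g r) →
        (∀ s : ℝ, R ≤ s → (∫ r in s..(2 * s), r ^ 2 * g r) ≤ K * s ^ a) →
        (∫ r in Set.Ioi R, r ^ p * g r) ≤ C * K * R ^ (a + p - 2) := by
  classical
  set q : ℝ := (2:ℝ) ^ (a + p - 2) with hq_def
  have hq_pos : 0 < q := Real.rpow_pos_of_pos (by norm_num) _
  have hq_lt : q < 1 :=
    Real.rpow_lt_one_of_one_lt_of_neg (by norm_num) (by linarith)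
  set M : ℝ := max 1 ((2:ℝ) ^ (p - 2)) with hM_def
  have hM1 : (1:ℝ) ≤ M := le_max_left _ _
  have hM0 : (0:ℝ) < M := lt_of_lt_of_le one_pos hM1
  refine ⟨M / (1 - q), div_pos hM0 (by linarith), ?_⟩
  intro R K g hR hK hg hg0 hbound
  have hRpow : (0:ℝ) < R ^ (a + p - 2) := Real.rpow_pos_of_pos hR _
  have hRHS0 : 0 ≤ M / (1 - q) * K * R ^ (a + p - 2) := by
    have : (0:ℝ) ≤ M / (1 - q) := le_of_lt (div_pos hM0 (by linarith))
    positivity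
  by_cases hInt : IntegrableOn (fun r => r ^ p * g r) (Set.Ioi R) volume
  swap
  · rw [MeasureTheory.integral_undef hInt]; exact hRHS0
  -- dyadic points
  set A : ℕ → ℝ := fun i => 2 ^ i * R with hA_def
  have hA_pos : ∀ i, 0 < A i := fun i => by positivity
  have hA_ge : ∀ i, R ≤ A i := by
    intro i
    have : (1:ℝ) ≤ 2 ^ i := one_le_pow₀ (by norm_num : (1:ℝ) ≤ 2)
    simp only [hA_def]
    nlinarith
  have hA_succ : ∀ i, A (i + 1) = 2 * A i := by
    intro i; simp [hA_def, pow_succ]; ring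
  -- the union
  have hUnion : (⋃ i : ℕ, Set.Ioc (A i) (A (i + 1))) = Set.Ioi R := by
    ext r
    simp only [Set.mem_iUnion, Set.mem_Ioc, Set.mem_Ioi]
    constructor
    · rintro ⟨i, h1, _⟩
      exact lt_of_le_of_lt (hA_ge i) h1
    · intro hr
      have hex : ∃ n : ℕ, r ≤ A n := by
        obtain ⟨n, hn⟩ := pow_unbounded_of_one_lt (r / R) (by norm_num : (1:ℝ) < 2)
        exact ⟨n, by rw [hA_def]; simp only []; rw [div_lt_iff₀ hR] at hn; nlinarith⟩
      let n := Nat.find hex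
      have hn_spec : r ≤ A n := Nat.find_spec hex
      have hn_pos : n ≠ 0 := by
        intro h0
        have := hn_spec
        rw [h0] at this
        simp [hA_def] at this
        linarith
      obtain ⟨j, hj⟩ := Nat.exists_eq_succ_of_ne_zero hn_pos
      refine ⟨j, ?_, ?_⟩
      · have := Nat.find_min hex (by omega : j < n)
        push_neg at this
        exact this
      · have : r ≤ A n := hn_spec
        rw [hj] at this
        exact this
  -- disjointness
  have hdisj : Pairwise (Function.onFun Disjoint fun i : ℕ => Set.Ioc (A i) (A (i + 1))) := by
    have hmono : ∀ i j : ℕ, i ≤ j → A i ≤ A j := by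
      intro i j hij
      have : (2:ℝ) ^ i ≤ 2 ^ j := pow_le_pow_right₀ (by norm_num) hij
      simp only [hA_def]
      nlinarith
    intro i j hij
    rcases hij.lt_or_gt with h | h
    · simp only [Function.onFun]
      rw [Set.Ioc_disjoint_Ioc]
      exact le_trans (min_le_left _ _) (le_trans (hmono _ _ (by omega)) (le_max_right _ _))
    · simp only [Function.onFun]
      rw [Set.Ioc_disjoint_Ioc]
      exact le_trans (min_le_right _ _) (le_trans (hmono _ _ (by omega)) (le_max_left _ _))
  -- integrability on pieces, and piecewise bound
  have hsub : ∀ i, Set.Ioc (A i) (A (i + 1)) ⊆ Set.Ioi R := by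
    intro i r hr
    exact lt_of_le_of_lt (hA_ge i) hr.1
  have hInt_piece : ∀ i, IntegrableOn (fun r => r ^ p * g r) (Set.Ioc (A i) (A (i + 1))) volume :=
    fun i => hInt.mono_set (hsub i)
  -- integrability of r^2 * g on pieces
  set M' : ℝ := max 1 ((2:ℝ) ^ (2 - p)) with hM'_def
  have hM'0 : (0:ℝ) < M' := lt_of_lt_of_le one_pos (le_max_left _ _)
  have hInt2_piece : ∀ i, IntegrableOn (fun r => r ^ 2 * g r) (Set.Ioc (A i) (A (i + 1))) volume := by
    intro i
    have hmeas : AEStronglyMeasurable (fun r => r ^ 2 * g r)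
        (volume.restrict (Set.Ioc (A i) (A (i + 1)))) :=
      ((measurable_id.pow_const 2).mul hg).aestronglyMeasurable
    refine Integrable.mono' (((hInt_piece i).const_mul (M' * A i ^ (2 - p)))) hmeas ?_
    rw [ae_restrict_iff' measurableSet_Ioc]
    filter_upwards with r hr
    have hr1 : A i ≤ r := hr.1.le
    have hr2 : r ≤ 2 * A i := by rw [← hA_succ i]; exact hr.2
    have hrpos : 0 < r := lt_of_lt_of_le (hA_pos i) hr1
    have hgr : 0 ≤ g r := hg0 r (le_trans (hA_ge i) hr1)
    have key : r ^ (2:ℝ) ≤ M' * A i ^ (2 - p) * r ^ p := by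
      have h1 : r ^ ((2:ℝ) - p) ≤ M' * A i ^ (2 - p) :=
        dyadic_rpow_bound (2 - p) (A i) r (hA_pos i) hr1 hr2
      have h2 : r ^ (2:ℝ) = r ^ ((2:ℝ) - p) * r ^ p := by
        rw [← Real.rpow_add hrpos]; ring_nf
      rw [h2]
      exact mul_le_mul_of_nonneg_right h1 (Real.rpow_pos_of_pos hrpos p).le
    have hr2nat : (r:ℝ) ^ (2:ℕ) = r ^ ((2:ℝ)) := by
      rw [← Real.rpow_natCast r 2]; norm_num
    rw [Real.norm_eq_abs, abs_of_nonneg (by positivity)]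
    calc r ^ 2 * g r = r ^ ((2:ℝ)) * g r := by rw [← hr2nat]
    _ ≤ (M' * A i ^ (2 - p) * r ^ p) * g r := mul_le_mul_of_nonneg_right key hgr
    _ = M' * A i ^ (2 - p) * (r ^ p * g r) := by ring
  -- per-piece bound
  have hpiece : ∀ i : ℕ, (∫ r in Set.Ioc (A i) (A (i + 1)), r ^ p * g r) ≤
      M * K * R ^ (a + p - 2) * q ^ i := by
    intro i
    have hAi := hA_pos i
    have step1 : (∫ r in Set.Ioc (A i) (A (i + 1)), r ^ p * g r) ≤
        ∫ r in Set.Ioc (A i) (A (i + 1)), M * A i ^ (p - 2) * (r ^ 2 * g r) := by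
      refine setIntegral_mono_on (hInt_piece i) ((hInt2_piece i).const_mul _)
        measurableSet_Ioc ?_
      intro r hr
      have hr1 : A i ≤ r := hr.1.le
      have hr2 : r ≤ 2 * A i := by rw [← hA_succ i]; exact hr.2
      have hrpos : 0 < r := lt_of_lt_of_le hAi hr1
      have hgr : 0 ≤ g r := hg0 r (le_trans (hA_ge i) hr1)
      have h1 : r ^ (p - 2) ≤ M * A i ^ (p - 2) :=
        dyadic_rpow_bound (p - 2) (A i) r hAi hr1 hr2
      have h2 : r ^ p = r ^ (p - 2) * r ^ (2:ℕ) := by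
        rw [← Real.rpow_natCast r 2, ← Real.rpow_add hrpos]; norm_num
      calc r ^ p * g r = r ^ (p - 2) * (r ^ 2 * g r) := by rw [h2]; ring
      _ ≤ M * A i ^ (p - 2) * (r ^ 2 * g r) := by
          apply mul_le_mul_of_nonneg_right h1 (by positivity)
    have step2 : (∫ r in Set.Ioc (A i) (A (i + 1)), M * A i ^ (p - 2) * (r ^ 2 * g r)) =
        M * A i ^ (p - 2) * ∫ r in Set.Ioc (A i) (A (i + 1)), r ^ 2 * g r :=
      integral_const_mul _ _
    have step3 : (∫ r in Set.Ioc (A i) (A (i + 1)), r ^ 2 * g r) ≤ K * A i ^ a := by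
      have hle : A i ≤ A (i + 1) := by rw [hA_succ i]; linarith
      have h2le : A i ≤ 2 * A i := by linarith [hA_pos i]
      have := hbound (A i) (hA_ge i)
      rw [intervalIntegral.integral_of_le h2le] at this
      rw [hA_succ i]
      exact this
    have hApow : (0:ℝ) ≤ A i ^ (p - 2) := (Real.rpow_pos_of_pos hAi _).le
    have step4 : M * A i ^ (p - 2) * (K * A i ^ a) = M * K * R ^ (a + p - 2) * q ^ i := by
      have hA_rpow : A i ^ (p - 2) * A i ^ a = A i ^ (a + p - 2) := by
        rw [← Real.rpow_add hAi]; ring_nf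
      have hA_split : A i ^ (a + p - 2) = q ^ i * R ^ (a + p - 2) := by
        rw [hA_def]
        simp only []
        rw [Real.mul_rpow (by positivity) hR.le, ← Real.rpow_natCast (2:ℝ) i,
          ← Real.rpow_mul (by norm_num), hq_def, ← Real.rpow_natCast ((2:ℝ) ^ (a + p - 2)) i,
          ← Real.rpow_mul (by norm_num)]
        ring_nf
      calc M * A i ^ (p - 2) * (K * A i ^ a)
          = M * K * (A i ^ (p - 2) * A i ^ a) := by ring
      _ = M * K * (q ^ i * R ^ (a + p - 2)) := by rw [hA_rpow, hA_split]
      _ = M * K * R ^ (a + p - 2) * q ^ i := by ring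
    calc (∫ r in Set.Ioc (A i) (A (i + 1)), r ^ p * g r)
        ≤ M * A i ^ (p - 2) * ∫ r in Set.Ioc (A i) (A (i + 1)), r ^ 2 * g r := by
          rw [← step2]; exact step1
    _ ≤ M * A i ^ (p - 2) * (K * A i ^ a) := by
        apply mul_le_mul_of_nonneg_left step3 (by positivity)
    _ = M * K * R ^ (a + p - 2) * q ^ i := step4
  -- nonnegativity of piece integrals
  have hpiece_nonneg : ∀ i : ℕ, 0 ≤ ∫ r in Set.Ioc (A i) (A (i + 1)), r ^ p * g r := by
    intro i
    apply setIntegral_nonneg measurableSet_Ioc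
    intro r hr
    have hr1 : A i ≤ r := hr.1.le
    have hrpos : 0 < r := lt_of_lt_of_le (hA_pos i) hr1
    have hgr : 0 ≤ g r := hg0 r (le_trans (hA_ge i) hr1)
    exact mul_nonneg (Real.rpow_pos_of_pos hrpos p).le hgr
  -- summability
  have hsum_rhs : Summable (fun i : ℕ => M * K * R ^ (a + p - 2) * q ^ i) :=
    (summable_geometric_of_lt_one hq_pos.le hq_lt).mul_left _
  have hsum_lhs : Summable (fun i : ℕ => ∫ r in Set.Ioc (A i) (A (i + 1)), r ^ p * g r) :=
    Summable.of_nonneg_of_le hpiece_nonneg hpiece hsum_rhs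
  -- put it together
  have hInt_union : IntegrableOn (fun r => r ^ p * g r)
      (⋃ i : ℕ, Set.Ioc (A i) (A (i + 1))) volume := by rw [hUnion]; exact hInt
  have hsplit : (∫ r in Set.Ioi R, r ^ p * g r) =
      ∑' i : ℕ, ∫ r in Set.Ioc (A i) (A (i + 1)), r ^ p * g r := by
    rw [← hUnion]
    exact integral_iUnion (fun i => measurableSet_Ioc) hdisj hInt_union
  rw [hsplit]
  calc (∑' i : ℕ, ∫ r in Set.Ioc (A i) (A (i + 1)), r ^ p * g r)
      ≤ ∑' i : ℕ, M * K * R ^ (a + p - 2) * q ^ i :=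
        Summable.tsum_le_tsum hpiece hsum_lhs hsum_rhs
  _ = M * K * R ^ (a + p - 2) * (1 - q)⁻¹ := by
      rw [tsum_mul_left, tsum_geometric_of_lt_one hq_pos.le hq_lt]
  _ = M / (1 - q) * K * R ^ (a + p - 2) := by ring
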